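/- If σ is wild (i.e., some growing letter c satisfies σⁿ(c) = ucv or σⁿ(c) = vcu with u a nonempty word over bounded letters, for some n ≥ 1), then the subshift X_σ contains a periodic bi-infinite word all of whose letters are bounded. -/

import Mathlib

open List
open scoped Classical

namespace SubstPaper

variable {A : Type*}

/-- Apply a substitution letterwise to a word. -/
def applyW (σ : A → List A) (u : List A) : List A := u.flatMap σ

/-- `n`-th iterate of a substitution on a word. -/
def iterW (σ : A → List A) (n : ℕ) (u : List A) : List A := (applyW σ)^[n] u

/-- Non-erasing substitution. -/
def NonErasing (σ : A → List A) : Prop := ∀ a, σ a ≠ []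

/-- A letter is bounded if the lengths of its iterated images stay bounded. -/
def IsBounded (σ : A → List A) (a : A) : Prop := ∃ K, ∀ n, (iterW σ n [a]).length ≤ K

/-- A letter is growing if it is not bounded. -/
def IsGrowing (σ : A → List A) (a : A) : Prop := ¬ IsBounded σ a

/-- The prefix of `u` consisting of bounded letters, before the first growing letter. -/
noncomputable def LBw (σ : A → List A) (u : List A) : List A :=
  u.takeWhile (fun a => decide (IsBounded σ a))

/-- The first growing letter of `u` (junk value if none). -/
noncomputable def LCw [Inhabited A] (σ : A → List A) (u : List A) : A :=
  (u.dropWhile (fun a => decide (IsBounded σ a))).headI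

/-- The bounded suffix of `u`, after the last growing letter. -/
noncomputable def RBw (σ : A → List A) (u : List A) : List A :=
  (LBw σ u.reverse).reverse

/-- The last growing letter of `u` (junk value if none). -/
noncomputable def RCw [Inhabited A] (σ : A → List A) (u : List A) : A :=
  LCw σ u.reverse

/-- Growing letters occurring in a word. -/
def alphC (σ : A → List A) (u : List A) : Set A := {c | IsGrowing σ c ∧ c ∈ u}

/-- The map on alphabets induced by the substitution: `D ↦ ⋃_{a ∈ D} alph_C(σ(a))`. -/
def FAlph (σ : A → List A) (D : Set A) : Set A := ⋃ a ∈ D, alphC σ (σ a)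

/-- `D` is a `k`-periodic alphabet: nonempty set of growing letters, `k` least positive
with `F^[k] D = D`. -/
def IsKPeriodicAlph (σ : A → List A) (D : Set A) (k : ℕ) : Prop :=
  D.Nonempty ∧ (∀ a ∈ D, IsGrowing σ a) ∧ 0 < k ∧ (FAlph σ)^[k] D = D ∧
    ∀ j, 0 < j → (FAlph σ)^[j] D = D → k ≤ j

/-- `D` is a minimal alphabet: periodic with no proper nonempty periodic subalphabet. -/
def IsMinimalAlph (σ : A → List A) (D : Set A) : Prop :=
  (∃ k, IsKPeriodicAlph σ D k) ∧
    ∀ D' ⊆ D, D'.Nonempty → (∃ k', IsKPeriodicAlph σ D' k') → D' = D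

/-- The finite word `u` occurs in the bi-infinite word `x`. -/
def OccursIn (x : ℤ → A) (u : List A) : Prop :=
  ∃ i : ℤ, ∀ j : Fin u.length, x (i + j.1) = u.get j

/-- The substitution subshift `X_σ`. -/
def Xsub (σ : A → List A) : Set (ℤ → A) :=
  {x | ∀ u, OccursIn x u → ∃ a n, u <:+: iterW σ n [a]}

/-- The left shift on bi-infinite words. -/
def shiftT (x : ℤ → A) : ℤ → A := fun i => x (i + 1)

/-- A subshift: nonempty, closed, shift-invariant. -/
def IsSubshift [TopologicalSpace A] (X : Set (ℤ → A)) : Prop :=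
  X.Nonempty ∧ IsClosed X ∧ shiftT '' X = X

/-- A minimal subshift: contains no proper subshift. -/
def IsMinimalSubshift [TopologicalSpace A] (X : Set (ℤ → A)) : Prop :=
  IsSubshift X ∧ ∀ Y ⊆ X, IsSubshift Y → Y = X

/-- The periodic bi-infinite word `ωuω`. -/
noncomputable def perWord [Inhabited A] (u : List A) : ℤ → A :=
  fun i => u.getD ((i % (u.length : ℤ)).toNat) default

/-- The shift-orbit closure `X(x)` of a bi-infinite word. -/
def orbitClosure [TopologicalSpace A] (x : ℤ → A) : Set (ℤ → A) :=
  closure {y | ∃ k : ℤ, ∀ i, y i = x (i + k)}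

/-- `x` is the letterwise image of `y` under `σ`, with the origin at the image of
position `0`. -/
def IsSubstImage (σ : A → List A) (y x : ℤ → A) : Prop :=
  ∃ c : ℤ → ℤ, c 0 = 0 ∧ (∀ i, c (i + 1) = c i + (σ (y i)).length) ∧
    ∀ i : ℤ, ∀ j : Fin (σ (y i)).length, x (c i + j.1) = (σ (y i)).get j

/-- The induced map `σ̃` on subshifts: all shifts of images of elements of `X`. -/
def tildeS (σ : A → List A) (X : Set (ℤ → A)) : Set (ℤ → A) :=
  {z | ∃ x ∈ X, ∃ k : ℤ, IsSubstImage σ x (fun i => z (i + k))}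

/-- Growing letters occurring in some element of `X`. -/
def alphCX (σ : A → List A) (X : Set (ℤ → A)) : Set A :=
  {c | IsGrowing σ c ∧ ∃ x ∈ X, ∃ i : ℤ, x i = c}

/-- The subshift of the restriction `σᵏ|_E` (words whose factors occur in some
`σ^{kn}(a)`, `a ∈ E`). -/
def Xrestr (σ : A → List A) (E : Set A) (k : ℕ) : Set (ℤ → A) :=
  {x | ∀ u, OccursIn x u → ∃ a ∈ E, ∃ n, u <:+: iterW σ (k * n) [a]}

/-- A growing letter `c` is left-isolated: `σⁿ(c) = u c v` with `u` nonempty bounded. -/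
def LeftIsolated (σ : A → List A) (c : A) : Prop :=
  IsGrowing σ c ∧ ∃ n, 1 ≤ n ∧ ∃ u v : List A, u ≠ [] ∧ (∀ b ∈ u, IsBounded σ b) ∧
    iterW σ n [c] = u ++ c :: v

/-- A growing letter `c` is right-isolated: `σⁿ(c) = v c u` with `u` nonempty bounded. -/
def RightIsolated (σ : A → List A) (c : A) : Prop :=
  IsGrowing σ c ∧ ∃ n, 1 ≤ n ∧ ∃ u v : List A, u ≠ [] ∧ (∀ b ∈ u, IsBounded σ b) ∧
    iterW σ n [c] = v ++ c :: u

/-- Growing letter that is neither left- nor right-isolated (member of `C_niso`). -/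
def NonIsolated (σ : A → List A) (c : A) : Prop :=
  IsGrowing σ c ∧ ¬ LeftIsolated σ c ∧ ¬ RightIsolated σ c

/-- A periodic letter: bounded, and occurring in some `σⁿ(a)`, `n ≥ 1`. -/
def IsPeriodicLetter (σ : A → List A) (a : A) : Prop :=
  IsBounded σ a ∧ ∃ n, 1 ≤ n ∧ [a] <:+: iterW σ n [a]

/-- `(a,u,b)` is a 1-block of the word `w`. -/
def Is1Block (σ : A → List A) (w : List A) (t : A × List A × A) : Prop :=
  IsGrowing σ t.1 ∧ IsGrowing σ t.2.2 ∧ (∀ x ∈ t.2.1, IsBounded σ x) ∧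
    (t.1 :: (t.2.1 ++ [t.2.2])) <:+: w

/-- The descendant map on 1-blocks. -/
noncomputable def Desc [Inhabited A] (σ : A → List A) : A × List A × A → A × List A × A :=
  fun t => (RCw σ (σ t.1), RBw σ (σ t.1) ++ applyW σ t.2.1 ++ LBw σ (σ t.2.2), LCw σ (σ t.2.2))

/-- The bi-infinite word `ωu.wvω`. -/
noncomputable def biWord [Inhabited A] (u w v : List A) : ℤ → A := fun i =>
  if i < 0 then u.getD ((i % (u.length : ℤ)).toNat) default
  else if i < (w.length : ℤ) then w.getD i.toNat default
  else v.getD (((i - (w.length : ℤ)) % (v.length : ℤ)).toNat) default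


/-! ### Auxiliary lemmas for `stmt9` -/

lemma applyW_append' (σ : A → List A) (u v : List A) :
    applyW σ (u ++ v) = applyW σ u ++ applyW σ v := List.flatMap_append

lemma iterW_add (σ : A → List A) (m k : ℕ) (u : List A) :
    iterW σ (m + k) u = iterW σ m (iterW σ k u) :=
  Function.iterate_add_apply _ m k u

lemma iterW_succ' (σ : A → List A) (m : ℕ) (u : List A) :
    iterW σ (m + 1) u = applyW σ (iterW σ m u) :=
  Function.iterate_succ_apply' _ m u

lemma iterW_append (σ : A → List A) (m : ℕ) (u v : List A) :
    iterW σ m (u ++ v) = iterW σ m u ++ iterW σ m v := by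
  induction m generalizing u v with
  | zero => rfl
  | succ k ih =>
    rw [iterW_succ', iterW_succ', iterW_succ', ih, applyW_append']

lemma iterW_cons (σ : A → List A) (m : ℕ) (a : A) (t : List A) :
    iterW σ m (a :: t) = iterW σ m [a] ++ iterW σ m t := by
  have := iterW_append σ m [a] t
  simpa using this

lemma iterW_ne_nil {σ : A → List A} (hσ : NonErasing σ) {u : List A} (hu : u ≠ []) (m : ℕ) :
    iterW σ m u ≠ [] := by
  induction m with
  | zero => exact hu
  | succ k ih =>
    rw [iterW_succ']
    obtain ⟨a, t, h⟩ := List.exists_cons_of_ne_nil ih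
    rw [h]
    have : applyW σ (a :: t) = σ a ++ applyW σ t := rfl
    rw [this]
    simp [hσ a]

lemma bounded_of_mem_sigma {σ : A → List A} {b a : A} (hb : IsBounded σ b) (ha : a ∈ σ b) :
    IsBounded σ a := by
  obtain ⟨K, hK⟩ := hb
  refine ⟨K, fun m => ?_⟩
  obtain ⟨s, t, hst⟩ := List.append_of_mem ha
  have h1 : iterW σ (m + 1) [b] = iterW σ m (σ b) := by
    rw [iterW_add]; congr 1
    show (applyW σ)^[1] [b] = σ b
    simp [applyW]
  have h2 : iterW σ m (σ b) = iterW σ m s ++ iterW σ m [a] ++ iterW σ m t := by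
    rw [hst]
    rw [iterW_append, iterW_cons, List.append_assoc]
  have := hK (m + 1)
  rw [h1, h2] at this
  simp only [List.length_append] at this
  omega

lemma bounded_of_mem_iterW {σ : A → List A} {u : List A} (hu : ∀ b ∈ u, IsBounded σ b)
    {a : A} {m : ℕ} (ha : a ∈ iterW σ m u) : IsBounded σ a := by
  induction m generalizing a with
  | zero => exact hu a ha
  | succ k ih =>
    rw [iterW_succ'] at ha
    obtain ⟨b, hb, hab⟩ := List.mem_flatMap.mp ha
    exact bounded_of_mem_sigma (ih hb) hab

lemma length_iterW_bounded {σ : A → List A} {u : List A} (hu : ∀ b ∈ u, IsBounded σ b) :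
    ∃ K, ∀ m, (iterW σ m u).length ≤ K := by
  induction u with
  | nil =>
    refine ⟨0, fun m => ?_⟩
    have : iterW σ m ([] : List A) = [] := by
      induction m with
      | zero => rfl
      | succ k ih => rw [iterW_succ', ih]; rfl
    simp [this]
  | cons a t ih =>
    obtain ⟨K1, hK1⟩ := hu a (by simp)
    obtain ⟨K2, hK2⟩ := ih (fun b hb => hu b (by simp [hb]))
    refine ⟨K1 + K2, fun m => ?_⟩
    rw [iterW_cons]
    simp only [List.length_append]
    exact Nat.add_le_add (hK1 m) (hK2 m)

/-- Concatenation `w (a+b-1) ++ ⋯ ++ w a` of a segment of a sequence of words. -/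
def seg (w : ℕ → List A) (a : ℕ) : ℕ → List A
  | 0 => []
  | b + 1 => w (a + b) ++ seg w a b

lemma seg_add (w : ℕ → List A) (a b c : ℕ) :
    seg w a (b + c) = seg w (a + b) c ++ seg w a b := by
  induction c with
  | zero => simp [seg]
  | succ k ih =>
    show seg w a (b + k + 1) = _
    rw [seg, seg, ih, List.append_assoc]
    congr 2
    omega

lemma seg_shift {w : ℕ → List A} {j0 p : ℕ} (hper : ∀ t, j0 ≤ t → w (t + p) = w t)
    {a : ℕ} (ha : j0 ≤ a) (b : ℕ) : seg w (a + p) b = seg w a b := by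
  induction b with
  | zero => rfl
  | succ k ih =>
    rw [seg, seg, ih]
    congr 1
    have : a + p + k = (a + k) + p := by omega
    rw [this, hper (a + k) (by omega)]

lemma seg_base_shift (w : ℕ → List A) {j0 p : ℕ} (hper : ∀ t, j0 ≤ t → w (t + p) = w t)
    (m b : ℕ) : seg w (j0 + m * p) b = seg w j0 b := by
  induction m with
  | zero => simp
  | succ k ih =>
    have : j0 + (k + 1) * p = (j0 + k * p) + p := by ring
    rw [this, seg_shift hper (by omega), ih]

lemma seg_mul (w : ℕ → List A) {j0 p : ℕ} (hper : ∀ t, j0 ≤ t → w (t + p) = w t) (m : ℕ) :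
    seg w j0 ((m + 1) * p) = seg w j0 p ++ seg w j0 (m * p) := by
  have h1 : (m + 1) * p = m * p + p := by ring
  rw [h1, seg_add, seg_base_shift w hper]

lemma seg_length_mul (w : ℕ → List A) {j0 p : ℕ} (hper : ∀ t, j0 ≤ t → w (t + p) = w t) (m : ℕ) :
    (seg w j0 (m * p)).length = m * (seg w j0 p).length := by
  induction m with
  | zero => simp [seg]
  | succ k ih => rw [seg_mul w hper, List.length_append, ih]; ring

lemma seg_getD (w : ℕ → List A) {j0 p : ℕ} (hper : ∀ t, j0 ≤ t → w (t + p) = w t)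
    (d : A) (m t : ℕ) (ht : t < m * (seg w j0 p).length) :
    (seg w j0 (m * p)).getD t d = (seg w j0 p).getD (t % (seg w j0 p).length) d := by
  set Q := seg w j0 p with hQ
  induction m generalizing t with
  | zero => omega
  | succ k ih =>
    rw [seg_mul w hper]
    by_cases h : t < Q.length
    · rw [List.getD_append _ _ _ _ h, Nat.mod_eq_of_lt h]
    · push_neg at h
      rw [List.getD_append_right _ _ _ _ h, Nat.mod_eq_sub_mod h]
      refine ih (t - Q.length) ?_
      have : (k + 1) * Q.length = k * Q.length + Q.length := by ring
      omega

lemma mem_seg {σ : A → List A} {w : ℕ → List A}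
    (hw : ∀ j, ∀ a ∈ w j, IsBounded σ a) {a : A} {j0 b : ℕ} (ha : a ∈ seg w j0 b) :
    IsBounded σ a := by
  induction b with
  | zero => simp [seg] at ha
  | succ k ih =>
    rw [seg, List.mem_append] at ha
    rcases ha with h | h
    · exact hw _ _ h
    · exact ih h

/-- The key construction in the left-isolated case. -/
lemma main_left [Fintype A] (σ : A → List A) (hσ : NonErasing σ) {c : A} {n : ℕ}
    (hn : 1 ≤ n) {u v : List A} (hu : u ≠ []) (hub : ∀ b ∈ u, IsBounded σ b)
    (heq : iterW σ n [c] = u ++ c :: v) :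
    ∃ x ∈ Xsub σ, (∀ i, IsBounded σ (x i)) ∧ ∃ p : ℕ, 0 < p ∧ ∀ i, x (i + p) = x i := by
  classical
  set w : ℕ → List A := fun j => iterW σ (j * n) u with hw
  have hwb : ∀ j, ∀ a ∈ w j, IsBounded σ a := fun j a ha => bounded_of_mem_iterW hub ha
  have hwne : ∀ j, w j ≠ [] := fun j => iterW_ne_nil hσ hu _
  obtain ⟨K, hK⟩ := length_iterW_bounded hub
  have hfin : Finite {l : List A | l.length ≤ K} := (List.finite_length_le A K).to_subtype
  obtain ⟨m1, m2, hne, hfe⟩ := Finite.exists_ne_map_eq_of_infinite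
    (fun m : ℕ => (⟨w m, hK (m * n)⟩ : {l : List A | l.length ≤ K}))
  have hfe' : w m1 = w m2 := by simpa using congrArg Subtype.val hfe
  obtain ⟨j0, p, hp, hj⟩ : ∃ j0 p, 0 < p ∧ w (j0 + p) = w j0 := by
    rcases lt_or_gt_of_ne hne with h | h
    · exact ⟨m1, m2 - m1, by omega, by rw [show m1 + (m2 - m1) = m2 by omega]; exact hfe'.symm⟩
    · exact ⟨m2, m1 - m2, by omega, by rw [show m2 + (m1 - m2) = m1 by omega]; exact hfe'⟩
  have hiter_eq : ∀ a b : ℕ, w (a + b) = iterW σ (b * n) (w a) := by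
    intro a b
    simp only [hw]
    rw [← iterW_add]
    congr 1
    rw [← Nat.add_mul]
    congr 1
    omega
  have hper : ∀ t, j0 ≤ t → w (t + p) = w t := by
    intro t ht
    have h1 : w t = iterW σ ((t - j0) * n) (w j0) := by
      have := hiter_eq j0 (t - j0)
      rw [show j0 + (t - j0) = t by omega] at this
      exact this
    have h2 : w (t + p) = iterW σ ((t - j0) * n) (w (j0 + p)) := by
      have := hiter_eq (j0 + p) (t - j0)
      rw [show j0 + p + (t - j0) = t + p by omega] at this
      exact this
    rw [h2, hj, ← h1]
  set Q := seg w j0 p with hQdef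
  set q := Q.length with hqdef
  have hq0 : 0 < q := by
    have hQsplit : Q = w (j0 + (p - 1)) ++ seg w j0 (p - 1) := by
      rw [hQdef, show p = (p - 1) + 1 by omega]
      rfl
    have hlen : 0 < (w (j0 + (p - 1))).length := List.length_pos_iff.mpr (hwne _)
    rw [hqdef, hQsplit, List.length_append]
    omega
  have hq' : (0 : ℤ) < (q : ℤ) := by exact_mod_cast hq0
  have hpref : ∀ k, ∃ v', iterW σ (k * n) [c] = seg w 0 k ++ c :: v' := by
    intro k
    induction k with
    | zero =>
      refine ⟨[], ?_⟩
      rw [Nat.zero_mul]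
      rfl
    | succ k ih =>
      obtain ⟨v', hv'⟩ := ih
      refine ⟨v' ++ iterW σ (k * n) v, ?_⟩
      have h1 : (k + 1) * n = k * n + n := by ring
      rw [h1, iterW_add, heq, iterW_append, iterW_cons, hv']
      have h2 : seg w 0 (k + 1) = w k ++ seg w 0 k := by
        have h3 : seg w 0 (k + 1) = w (0 + k) ++ seg w 0 k := rfl
        rwa [Nat.zero_add] at h3
      rw [h2]
      simp only [hw]
      simp [List.append_assoc]
  refine ⟨fun i => Q.getD ((i % (q : ℤ)).toNat) c, ?_, ?_, q, hq0, ?_⟩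
  · -- x ∈ Xsub σ
    intro u' hocc
    obtain ⟨i, hi⟩ := hocc
    rcases Nat.eq_zero_or_pos u'.length with hL0 | hL0
    · exact ⟨c, 0, (List.length_eq_zero_iff.mp hL0) ▸ List.nil_infix⟩
    set L := u'.length with hLdef
    set m := L + 1 with hmdef
    set s := (i % (q : ℤ)).toNat with hs
    have e0 : i % (q : ℤ) = (s : ℤ) :=
      (Int.toNat_of_nonneg (Int.emod_nonneg i (ne_of_gt hq'))).symm
    have hsq : s < q := by
      have h3 := Int.emod_lt_of_pos i hq'
      omega
    have hZlen : (seg w j0 (m * p)).length = m * q := seg_length_mul w hper m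
    have hmq : m * q = L * q + q := by ring
    have hLq : L ≤ L * q := Nat.le_mul_of_pos_right L hq0
    have hLu : u'.length = L := rfl
    have hkey : ∀ (j : ℕ) (hj1 : j < L) (hj2 : s + j < (seg w j0 (m * p)).length),
        u'[j]'(by omega) = (seg w j0 (m * p))[s + j]'hj2 := by
      intro j hj hj2
      have h1 := hi ⟨j, by omega⟩
      simp only [List.get_eq_getElem] at h1
      have e1 : (i + (j : ℤ)) % (q : ℤ) = (((s + j) % q : ℕ) : ℤ) := by
        rw [← Int.emod_add_emod, e0]
        push_cast
        ring
      have e2 : ((i + (j : ℤ)) % (q : ℤ)).toNat = (s + j) % q := by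
        rw [e1]
        exact Int.toNat_natCast _
      rw [← h1, e2]
      have h3 : s + j < m * q := by omega
      have h4 := seg_getD w hper c m (s + j) h3
      rw [← List.getD_eq_getElem _ c hj2, h4]
    have hinfix : u' <:+: seg w j0 (m * p) := by
      have hu'eq : u' = ((seg w j0 (m * p)).drop s).take L := by
        apply List.ext_getElem
        · rw [List.length_take, List.length_drop, hZlen]
          omega
        · intro t h1 h2
          rw [List.getElem_take, List.getElem_drop]
          exact hkey t (by omega) (by rw [hZlen]; omega)
      rw [hu'eq]
      exact (List.take_prefix _ _).isInfix.trans (List.drop_suffix _ _).isInfix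
    refine ⟨c, (j0 + m * p) * n, ?_⟩
    obtain ⟨v', hv'⟩ := hpref (j0 + m * p)
    have hsplit : seg w 0 (j0 + m * p) = seg w j0 (m * p) ++ seg w 0 j0 := by
      have := seg_add w 0 j0 (m * p)
      simpa using this
    rw [hv', hsplit, List.append_assoc]
    exact hinfix.trans (List.prefix_append _ _).isInfix
  · -- bounded letters
    intro i
    show IsBounded σ (Q.getD ((i % (q : ℤ)).toNat) c)
    have h2 := Int.emod_nonneg i (ne_of_gt hq')
    have h3 := Int.emod_lt_of_pos i hq'
    have h1 : ((i % (q : ℤ)).toNat) < Q.length := by omega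
    rw [List.getD_eq_getElem Q c h1]
    exact mem_seg hwb (List.getElem_mem h1)
  · -- periodicity
    intro i
    have h1 : (i + (q : ℤ)) % (q : ℤ) = i % (q : ℤ) := by
      have := Int.add_mul_emod_self_left i (q : ℤ) 1
      simpa using this
    simp only [h1]

lemma iterW_reverse (σ : A → List A) (m : ℕ) (l : List A) :
    iterW (fun a => (σ a).reverse) m l = (iterW σ m l.reverse).reverse := by
  have happ : ∀ l : List A, applyW (fun a => (σ a).reverse) l = (applyW σ l.reverse).reverse := by
    intro l
    induction l with
    | nil => rfl
    | cons a t ih =>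
      show (σ a).reverse ++ applyW (fun a => (σ a).reverse) t = _
      rw [ih]
      have : applyW σ ((a :: t).reverse) = applyW σ t.reverse ++ σ a := by
        rw [List.reverse_cons, applyW_append']
        simp [applyW]
      rw [this, List.reverse_append]
  induction m with
  | zero => simp [iterW]
  | succ k ih =>
    rw [iterW_succ', iterW_succ', ih, happ, List.reverse_reverse]

lemma isBounded_reverse (σ : A → List A) (a : A) :
    IsBounded (fun a => (σ a).reverse) a ↔ IsBounded σ a := by
  have h : ∀ m, (iterW (fun a => (σ a).reverse) m [a]).length = (iterW σ m [a]).length := by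
    intro m
    rw [iterW_reverse]
    simp
  unfold IsBounded
  constructor
  · rintro ⟨K, hK⟩
    exact ⟨K, fun m => by rw [← h m]; exact hK m⟩
  · rintro ⟨K, hK⟩
    exact ⟨K, fun m => by rw [h m]; exact hK m⟩

/-- If `σ` is wild, then `X_σ` contains a periodic bi-infinite word over bounded
letters. -/
theorem stmt9 [Fintype A] (σ : A → List A) (hσ : NonErasing σ)
    (hC : ∃ c, IsGrowing σ c)
    (hwild : ∃ c, LeftIsolated σ c ∨ RightIsolated σ c) :
    ∃ x ∈ Xsub σ, (∀ i, IsBounded σ (x i)) ∧ ∃ p : ℕ, 0 < p ∧ ∀ i, x (i + p) = x i := by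
  classical
  obtain ⟨c, hc⟩ := hwild
  rcases hc with hL | hR
  · obtain ⟨hg, n, hn, u, v, hune, hub, heq⟩ := hL
    exact main_left σ hσ hn hune hub heq
  · obtain ⟨hg, n, hn, u, v, hune, hub, heq⟩ := hR
    set σ' : A → List A := fun a => (σ a).reverse with hσ'
    have hσ'ne : NonErasing σ' := fun a => by simp [hσ', hσ a]
    have hub' : ∀ b ∈ u.reverse, IsBounded σ' b := by
      intro b hb
      rw [isBounded_reverse]
      exact hub b (List.mem_reverse.mp hb)
    have heq' : iterW σ' n [c] = u.reverse ++ c :: v.reverse := by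
      rw [hσ', iterW_reverse]
      show (iterW σ n [c]).reverse = _
      rw [heq]
      simp
    have hune' : u.reverse ≠ [] := by simpa using hune
    obtain ⟨x', hx'X, hx'b, p, hp, hx'per⟩ := main_left σ' hσ'ne hn hune' hub' heq'
    refine ⟨fun i => x' (-i), ?_, ?_, p, hp, ?_⟩
    · intro u' hocc
      obtain ⟨i, hi⟩ := hocc
      have hocc' : OccursIn x' u'.reverse := by
        refine ⟨-i - (u'.length - 1), fun j => ?_⟩
        have hj : (j : ℕ) < u'.length := by
          have := j.2
          simpa using this
        have hL1 : 1 ≤ u'.length := by omega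
        have h1 := hi ⟨u'.length - 1 - j, by omega⟩
        simp only at h1
        have harg : -i - ((u'.length : ℤ) - 1) + (j : ℤ) =
            -(i + ((u'.length - 1 - (j : ℕ) : ℕ) : ℤ)) := by
          push_cast [Nat.cast_sub, hL1]
          omega
        rw [harg]
        show x' (-(i + _)) = _
        rw [h1]
        rw [List.get_eq_getElem, List.get_eq_getElem, List.getElem_reverse]
      obtain ⟨a, m, hinf⟩ := hx'X u'.reverse hocc'
      refine ⟨a, m, ?_⟩
      rw [iterW_reverse] at hinf
      exact List.reverse_infix.mp hinf
    · intro i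
      have := hx'b (-i)
      rwa [isBounded_reverse] at this
    · intro i
      have h1 := hx'per (-i - p)
      have h2 : -i - (p : ℤ) + (p : ℤ) = -i := by ring
      rw [h2] at h1
      show x' (-(i + (p : ℤ))) = x' (-i)
      have h3 : -(i + (p : ℤ)) = -i - (p : ℤ) := by ring
      rw [h3, ← h1]


end SubstPaper
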